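/- arXiv:2208.06693 — 2 statements merged into one kernel-verified Lean document; each statement's English description precedes it below -/
import Mathlib

section
/- Let Δ be a normal (d−1)-pseudomanifold without boundary and let F be a face of Δ. If σ is a minimal interior face of the antistar Δ−F, then there exists a nonempty subset H ⊆ F such that σ ∪ H is a missing face of Δ. -/
open scoped BigOperators Classical

noncomputable section

namespace AffineStress

variable {V : Type} [Fintype V] [LinearOrder V]

/-- An abstract simplicial complex: a nonempty, downward closed family of finite sets. -/
def IsComplex (Δ : Set (Finset V)) : Prop :=
  Δ.Nonempty ∧ ∀ σ ∈ Δ, ∀ τ ⊆ σ, τ ∈ Δ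

/-- The vertex set of a complex. -/
def vertices (Δ : Set (Finset V)) : Set V := {v | {v} ∈ Δ}

/-- The (closed) star of a face. -/
def closedStar (Δ : Set (Finset V)) (F : Finset V) : Set (Finset V) := {σ | σ ∪ F ∈ Δ}

/-- The link of a face. -/
def link (Δ : Set (Finset V)) (F : Finset V) : Set (Finset V) :=
  {σ | σ ∪ F ∈ Δ ∧ Disjoint σ F}

/-- The antistar of a face:  Δ − F. -/
def antistar (Δ : Set (Finset V)) (F : Finset V) : Set (Finset V) := {σ ∈ Δ | ¬ F ⊆ σ}

/-- A missing face: not a face, but all proper subsets are faces. -/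
def IsMissingFace (Δ : Set (Finset V)) (F : Finset V) : Prop :=
  F ∉ Δ ∧ ∀ σ ⊂ F, σ ∈ Δ

/-- A flag complex: all missing faces are 1-dimensional (have two elements). -/
def IsFlag (Δ : Set (Finset V)) : Prop := ∀ F, IsMissingFace Δ F → F.card = 2

/-- A facet: a maximal face. -/
def IsFacetOf (Δ : Set (Finset V)) (F : Finset V) : Prop :=
  F ∈ Δ ∧ ∀ G ∈ Δ, F ⊆ G → G = F

/-- A pure (d−1)-dimensional complex: all facets have d vertices. -/
def IsPure (d : ℕ) (Δ : Set (Finset V)) : Prop :=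
  (∀ σ ∈ Δ, σ.card ≤ d) ∧ (∃ σ ∈ Δ, σ.card = d) ∧ ∀ F, IsFacetOf Δ F → F.card = d

/-- Connectivity of a complex: any two vertices are joined by a path of edges. -/
def ComplexConnected (Γ : Set (Finset V)) : Prop :=
  ∀ u v : V, {u} ∈ Γ → {v} ∈ Γ →
    Relation.ReflTransGen (fun a b => ({a, b} : Finset V) ∈ Γ) u v

/-- The set of facets containing a given ridge. -/
def facetsContaining (Δ : Set (Finset V)) (R : Finset V) : Set (Finset V) :=
  {F | IsFacetOf Δ F ∧ R ⊆ F}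

/-- A (d−1)-dimensional pseudomanifold without boundary. -/
def IsPseudomanifold (d : ℕ) (Δ : Set (Finset V)) : Prop :=
  IsComplex Δ ∧ IsPure d Δ ∧ ∀ R ∈ Δ, R.card = d - 1 → (facetsContaining Δ R).ncard = 2

/-- A normal (d−1)-pseudomanifold without boundary. -/
def IsNormalPseudomanifold (d : ℕ) (Δ : Set (Finset V)) : Prop :=
  IsPseudomanifold d Δ ∧ ∀ F ∈ Δ, F.card + 2 ≤ d → ComplexConnected (link Δ F)

/-- The boundary complex of a pure (d−1)-dimensional complex: the subcomplex generated by
the ridges lying in exactly one facet. -/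
def complexBoundary (d : ℕ) (Γ : Set (Finset V)) : Set (Finset V) :=
  {τ | ∃ R, τ ⊆ R ∧ R ∈ Γ ∧ R.card = d - 1 ∧ (facetsContaining Γ R).ncard = 1}

/-- A minimal interior face: a face not in the boundary, all of whose proper subsets
are boundary faces. -/
def IsMinIntFace (d : ℕ) (Γ : Set (Finset V)) (G : Finset V) : Prop :=
  G ∈ Γ ∧ G ∉ complexBoundary d Γ ∧ ∀ τ ⊂ G, τ ∈ complexBoundary d Γ

/-- Two facets are adjacent if they share a ridge. -/
def Adjacent (d : ℕ) (Δ : Set (Finset V)) (F G : Finset V) : Prop :=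
  IsFacetOf Δ F ∧ IsFacetOf Δ G ∧ d - 1 ≤ (F ∩ G).card

/-- A strongly connected pure (d−1)-dimensional complex. -/
def StronglyConnected (d : ℕ) (Δ : Set (Finset V)) : Prop :=
  IsComplex Δ ∧ IsPure d Δ ∧
    ∀ F G, IsFacetOf Δ F → IsFacetOf Δ G → Relation.ReflTransGen (Adjacent d Δ) F G

/-- The directional derivative operator ∂_θ = Σ_v θ_v ∂/∂x_v. -/
def dirDeriv (θ : V → ℝ) : MvPolynomial V ℝ →ₗ[ℝ] MvPolynomial V ℝ :=
  ∑ v : V, θ v • (MvPolynomial.pderiv v).toLinearMap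

/-- Polynomials each of whose monomials is supported on a face of Δ. -/
def supportedOn (Δ : Set (Finset V)) : Submodule ℝ (MvPolynomial V ℝ) where
  carrier := {f | ∀ m ∈ f.support, (m.support : Finset V) ∈ Δ}
  zero_mem' := by intro m hm; simp at hm
  add_mem' := by
    intro f g hf hg m hm
    rcases Finset.mem_union.mp (MvPolynomial.support_add hm) with h | h
    exacts [hf m h, hg m h]
  smul_mem' := by
    intro c f hf m hm
    exact hf m (MvPolynomial.support_smul hm)

/-- The space of linear k-stresses on (Δ, p), p : V → ℝ^d. -/
def linStress (d : ℕ) (Δ : Set (Finset V)) (p : V → Fin d → ℝ) (k : ℕ) :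
    Submodule ℝ (MvPolynomial V ℝ) :=
  (MvPolynomial.homogeneousSubmodule V ℝ k ⊓ supportedOn Δ) ⊓
    ⨅ j : Fin d, LinearMap.ker (dirDeriv fun v => p v j)

/-- The space of affine k-stresses on (Δ, p). -/
def affStress (d : ℕ) (Δ : Set (Finset V)) (p : V → Fin d → ℝ) (k : ℕ) :
    Submodule ℝ (MvPolynomial V ℝ) :=
  linStress d Δ p k ⊓ LinearMap.ker (dirDeriv (fun _ : V => (1 : ℝ)))

/-- The coefficient of the squarefree monomial x_G in f. -/
def faceCoeff (G : Finset V) (f : MvPolynomial V ℝ) : ℝ :=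
  MvPolynomial.coeff (∑ v ∈ G, Finsupp.single v 1) f

/-- The iterated partial derivative ∂_{x_S} (with respect to the squarefree monomial x_S). -/
def iterDeriv (S : Finset V) (f : MvPolynomial V ℝ) : MvPolynomial V ℝ :=
  (S.sort (· ≤ ·)).foldr (fun v g => MvPolynomial.pderiv v g) f

/-- fnum Δ j = f_{j-1}(Δ), the number of faces with j vertices. -/
def fnum (Δ : Set (Finset V)) (j : ℕ) : ℕ := {σ ∈ Δ | σ.card = j}.ncard

/-- The h-numbers of a (d−1)-dimensional complex. -/
def hnum (d : ℕ) (Δ : Set (Finset V)) (j : ℕ) : ℤ :=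
  ∑ m ∈ Finset.range (j + 1), (-1 : ℤ) ^ (j - m) * ((d - m).choose (d - j)) * (fnum Δ m : ℤ)

/-- The g-numbers of a (d−1)-dimensional complex. -/
def gnum (d : ℕ) (Δ : Set (Finset V)) : ℕ → ℤ
  | 0 => 1
  | j + 1 => hnum d Δ (j + 1) - hnum d Δ j

/-- F is the set of vertices lying on a supporting hyperplane of the point
configuration p, i.e., the vertex set of a proper face of the polytope conv(p(V)). -/
def IsFaceSet {d : ℕ} (p : V → Fin d → ℝ) (F : Finset V) : Prop :=
  ∃ (ℓ : (Fin d → ℝ) →ₗ[ℝ] ℝ) (c : ℝ),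
    (∀ v, ℓ (p v) ≤ c) ∧ (∃ v, ℓ (p v) < c) ∧ ∀ v, v ∈ F ↔ ℓ (p v) = c

/-- (Δ, p) is the boundary complex of a simplicial d-polytope with its natural embedding:
the points p(v) affinely span ℝ^d, each p(v) is a vertex of the polytope conv(p(V)),
Δ consists exactly of the vertex sets of proper faces, and all proper faces are simplices. -/
def IsPolytopeBoundary (d : ℕ) (Δ : Set (Finset V)) (p : V → Fin d → ℝ) : Prop :=
  affineSpan ℝ (Set.range p) = ⊤ ∧
  (∀ v : V, p v ∉ convexHull ℝ (p '' {u | u ≠ v})) ∧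
  (∀ F : Finset V, F ∈ Δ ↔ IsFaceSet p F) ∧
  ∀ F ∈ Δ, AffineIndependent ℝ (fun v : F => p v.1)

/-- A generic embedding: the coordinates of the images of the vertices of Δ are
algebraically independent over ℚ. -/
def IsGeneric {d : ℕ} (Δ : Set (Finset V)) (p : V → Fin d → ℝ) : Prop :=
  AlgebraicIndependent ℚ (fun x : vertices Δ × Fin d => p x.1.1 x.2)

/-- A bistellar flip on a (d−1)-dimensional complex: replace the induced subcomplex
Ā ∗ ∂B̄ by ∂Ā ∗ B̄. -/
def BistellarFlip (d : ℕ) (Δ Δ' : Set (Finset V)) : Prop :=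
  ∃ A B : Finset V, Disjoint A B ∧ A.Nonempty ∧ B.Nonempty ∧ A.card + B.card = d + 1 ∧
    (∀ σ ∈ Δ, A ⊆ σ → σ ⊆ A ∪ B) ∧
    (∀ σ : Finset V, σ ⊆ A ∪ B → (σ ∈ Δ ↔ ¬ B ⊆ σ)) ∧
    Δ' = {σ ∈ Δ | ¬ A ⊆ σ} ∪ {σ : Finset V | σ ⊆ A ∪ B ∧ ¬ A ⊆ σ}

/-- A PL (d−1)-sphere: a complex obtained from the boundary of a d-simplex by a finite
sequence of bistellar flips (Pachner's theorem). -/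
def IsPLSphere (d : ℕ) (Δ : Set (Finset V)) : Prop :=
  ∃ S : Finset V, S.card = d + 1 ∧
    Relation.ReflTransGen (BistellarFlip d) {σ : Finset V | σ ⊆ S ∧ σ ≠ S} Δ

/-- The space of (reduced, j-th level) simplicial chains: functions on faces with j
vertices. Level j corresponds to reduced homological degree j−1. -/
abbrev chains (𝕜 : Type) [Field 𝕜] (Γ : Set (Finset V)) (j : ℕ) : Type _ :=
  {σ : Finset V // σ ∈ Γ ∧ σ.card = j} → 𝕜

/-- The simplicial boundary operator (with orientations from the linear order on V). -/
def bdry (𝕜 : Type) [Field 𝕜] (Γ : Set (Finset V)) (j : ℕ) :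
    chains 𝕜 Γ (j + 1) →ₗ[𝕜] chains 𝕜 Γ j :=
  LinearMap.pi fun τ : {σ : Finset V // σ ∈ Γ ∧ σ.card = j} =>
    ∑ v : V,
      if h : v ∉ τ.1 ∧ insert v τ.1 ∈ Γ then
        ((-1 : 𝕜) ^ (τ.1.filter (· < v)).card) •
          LinearMap.proj (R := 𝕜) (φ := fun _ : {σ : Finset V // σ ∈ Γ ∧ σ.card = j + 1} => 𝕜)
            ⟨insert v τ.1, h.2, by rw [Finset.card_insert_of_notMem h.1, τ.2.2]⟩
      else 0

/-- The reduced Betti numbers: betti 𝕜 Γ j = dim H̃_{j−1}(Γ; 𝕜). -/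
def betti (𝕜 : Type) [Field 𝕜] (Γ : Set (Finset V)) : ℕ → ℕ
  | 0 => Module.finrank 𝕜 (chains 𝕜 Γ 0) - Module.finrank 𝕜 (LinearMap.range (bdry 𝕜 Γ 0))
  | j + 1 => Module.finrank 𝕜 (LinearMap.ker (bdry 𝕜 Γ j)) -
      Module.finrank 𝕜 (LinearMap.range (bdry 𝕜 Γ (j + 1)))

/-- Γ has the reduced homology of an (n−1)-sphere over 𝕜. -/
def HasSphereHomology (𝕜 : Type) [Field 𝕜] (Γ : Set (Finset V)) (n : ℕ) : Prop :=
  ∀ j, betti 𝕜 Γ j = if j = n then 1 else 0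

/-- Γ has the reduced homology of a ball (trivial reduced homology) over 𝕜. -/
def HasBallHomology (𝕜 : Type) [Field 𝕜] (Γ : Set (Finset V)) : Prop :=
  ∀ j, betti 𝕜 Γ j = 0

/-- Δ is a 𝕜-homology (d−1)-sphere: a (d−1)-dimensional complex all of whose face links
have the homology of spheres of the appropriate dimension. -/
def IsHomologySphere (𝕜 : Type) [Field 𝕜] (d : ℕ) (Δ : Set (Finset V)) : Prop :=
  IsComplex Δ ∧ (∀ σ ∈ Δ, σ.card ≤ d) ∧ (∃ σ ∈ Δ, σ.card = d) ∧
    ∀ F ∈ Δ, HasSphereHomology 𝕜 (link Δ F) (d - F.card)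

/-- The boundary complex of a homology ball: the faces whose links have the homology
of balls. -/
def ballBoundary (𝕜 : Type) [Field 𝕜] (B : Set (Finset V)) : Set (Finset V) :=
  {F ∈ B | HasBallHomology 𝕜 (link B F)}

/-- B is a 𝕜-homology d-ball. -/
def IsHomologyBall (𝕜 : Type) [Field 𝕜] (d : ℕ) (B : Set (Finset V)) : Prop :=
  IsComplex B ∧ (∀ σ ∈ B, σ.card ≤ d + 1) ∧ (∃ σ ∈ B, σ.card = d + 1) ∧
    HasBallHomology 𝕜 B ∧
    (∀ F ∈ B, F.Nonempty →
      HasBallHomology 𝕜 (link B F) ∨ HasSphereHomology 𝕜 (link B F) (d + 1 - F.card)) ∧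
    IsHomologySphere 𝕜 d (ballBoundary 𝕜 B)

/-- A k-stacked ℝ-homology d-ball: all interior faces have dimension ≥ d−k. -/
def IsKStackedBall (d k : ℕ) (B : Set (Finset V)) : Prop :=
  IsHomologyBall ℝ d B ∧ ∀ F ∈ B, F ∉ ballBoundary ℝ B → d - k + 1 ≤ F.card

/-- A k-stacked (d−1)-sphere: the boundary of some k-stacked ℝ-homology d-ball. -/
def IsKStackedSphere (d k : ℕ) (Δ : Set (Finset V)) : Prop :=
  ∃ B : Set (Finset V), IsKStackedBall d k B ∧ ballBoundary ℝ B = Δ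

/-- T(Δ) = {F : every subset of F with at most d−k elements is a face of Δ}. -/
def TComplex (d k : ℕ) (Δ : Set (Finset V)) : Set (Finset V) :=
  {F | ∀ G ⊆ F, G.card ≤ d - k → G ∈ Δ}

/-- The join F̄ ∗ Δ of the full simplex on F with Δ. -/
def simplexJoin (F : Finset V) (Δ : Set (Finset V)) : Set (Finset V) :=
  {τ | ∃ σ₁ σ₂ : Finset V, σ₁ ⊆ F ∧ σ₂ ∈ Δ ∧ τ = σ₁ ∪ σ₂}

/-- (q, link Δ {v}) is a vertex figure of (p, Δ) at v: q realizes, in a hyperplane H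
separating p(v) from the other vertices, the intersections of the edges at v with H. -/
def IsVertexFigure {m : ℕ} (Δ : Set (Finset V)) (p : V → Fin (m + 1) → ℝ) (v : V)
    (q : V → Fin m → ℝ) : Prop :=
  ∃ (φ : (Fin m → ℝ) →ᵃ[ℝ] (Fin (m + 1) → ℝ)) (ℓ : (Fin (m + 1) → ℝ) →ₗ[ℝ] ℝ) (c : ℝ),
    Function.Injective φ ∧ (∀ x, ℓ (φ x) = c) ∧
    ℓ (p v) < c ∧ (∀ u : V, {u} ∈ Δ → u ≠ v → c < ℓ (p u)) ∧
    ∀ u : V, {u} ∈ link Δ {v} → ∃ t : ℝ, 0 < t ∧ t < 1 ∧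
      φ (q u) = p v + t • (p u - p v)

/-- Iterated vertex figures along a list of vertices. -/
def IsIterVertexFigure : (L : List V) → (m : ℕ) → Set (Finset V) →
    (V → Fin (m + L.length) → ℝ) → (V → Fin m → ℝ) → Prop
  | [], _, _, p, q => p = q
  | v :: L, m, Δ, p, q => ∃ p' : V → Fin (m + L.length) → ℝ,
      IsVertexFigure Δ p v p' ∧ IsIterVertexFigure L m (link Δ {v}) p' q

/-- (q, link Δ F) is the natural embedding of the quotient of (Δ, p) by the face F,
obtained by iterated vertex figures at the vertices of F. -/
def IsQuotientEmbedding {d m : ℕ} (Δ : Set (Finset V)) (p : V → Fin d → ℝ)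
    (F : Finset V) (q : V → Fin m → ℝ) : Prop :=
  ∃ (L : List V) (h : m + L.length = d), L.Nodup ∧ L.toFinset = F ∧
    IsIterVertexFigure L m Δ (fun v j => p v (Fin.cast h j)) q

/-- An infinitesimally d-rigid framework: the vertex images affinely span ℝ^d and
dim Stress^a_2 = f_1 − d f_0 + C(d+1, 2). -/
def InfinitesimallyRigid (d : ℕ) (Γ : Set (Finset V)) (p : V → Fin d → ℝ) : Prop :=
  affineSpan ℝ (p '' vertices Γ) = ⊤ ∧
  (Module.finrank ℝ (affStress d Γ p 2) : ℤ) =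
    (fnum Γ 2 : ℤ) - d * (fnum Γ 1 : ℤ) + (d + 1).choose 2

/-- Δ is isomorphic to the octahedral (d−1)-sphere (the boundary of the d-dimensional
cross-polytope, i.e., the join of d copies of the 0-sphere). -/
def IsCrossPolytopeSphere (d : ℕ) (Δ : Set (Finset V)) : Prop :=
  ∃ a b : Fin d → V, Function.Injective (Sum.elim a b) ∧
    ∀ σ : Finset V, σ ∈ Δ ↔
      ((∀ v ∈ σ, (∃ t, v = a t) ∨ ∃ t, v = b t) ∧ ∀ t, ¬ ({a t, b t} : Finset V) ⊆ σ)

end AffineStress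

namespace AffineStress

lemma exists_facet_above {V : Type} [Fintype V] [LinearOrder V]
    {Δ : Set (Finset V)} {σ : Finset V} (hσ : σ ∈ Δ) :
    ∃ G, IsFacetOf Δ G ∧ σ ⊆ G := by
  classical
  obtain ⟨G, hG, hmax⟩ :=
    Finset.exists_max_image (Finset.univ.filter (fun τ => τ ∈ Δ ∧ σ ⊆ τ)) Finset.card
      ⟨σ, by simp [hσ]⟩
  simp only [Finset.mem_filter, Finset.mem_univ, true_and] at hG hmax
  refine ⟨G, ⟨hG.1, fun T hT hsub => (Finset.eq_of_subset_of_card_le hsub ?_).symm⟩, hG.2⟩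
  exact hmax T ⟨hT, hG.2.trans hsub⟩

lemma facet_of_card_eq {V : Type} [Fintype V] [LinearOrder V]
    {d : ℕ} {Δ : Set (Finset V)} (hp : IsPure d Δ) {σ : Finset V}
    (hσ : σ ∈ Δ) (hc : σ.card = d) : IsFacetOf Δ σ :=
  ⟨hσ, fun G hG hsub => Finset.eq_of_subset_of_card_le hsub (hc ▸ hp.1 G hG) ▸ rfl⟩

/-- If τ is in the boundary of the antistar Δ−F, then τ ∪ F ∈ Δ. -/
lemma union_mem_of_mem_antistar_boundary {V : Type} [Fintype V] [LinearOrder V]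
    {d : ℕ} {Δ : Set (Finset V)} (hΔ : IsPseudomanifold d Δ)
    {F τ : Finset V} (hτ : τ ∈ complexBoundary d (antistar Δ F)) : τ ∪ F ∈ Δ := by
  obtain ⟨R, hτR, hRΓ, hRcard, hone⟩ := hτ
  obtain ⟨hRΔ, hFR⟩ := hRΓ
  obtain ⟨G₁, G₂, hne, hset⟩ := Set.ncard_eq_two.mp (hΔ.2.2 R hRΔ hRcard)
  have hG₁ : G₁ ∈ facetsContaining Δ R := by rw [hset]; exact Set.mem_insert _ _
  have hG₂ : G₂ ∈ facetsContaining Δ R := by rw [hset]; exact Set.mem_insert_iff.mpr (Or.inr rfl)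
  by_cases h₁ : F ⊆ G₁
  · exact hΔ.1.2 G₁ hG₁.1.1 _ (Finset.union_subset (hτR.trans hG₁.2) h₁)
  by_cases h₂ : F ⊆ G₂
  · exact hΔ.1.2 G₂ hG₂.1.1 _ (Finset.union_subset (hτR.trans hG₂.2) h₂)
  -- otherwise both facets lie in the antistar, contradicting ncard = 1
  exfalso
  have hfacet : ∀ G : Finset V, G ∈ facetsContaining Δ R → ¬ F ⊆ G →
      G ∈ facetsContaining (antistar Δ F) R := by
    intro G hG hFG
    exact ⟨⟨⟨hG.1.1, hFG⟩, fun T hT hsub => hG.1.2 T hT.1 hsub⟩, hG.2⟩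
  obtain ⟨a, ha⟩ := Set.ncard_eq_one.mp hone
  have e₁ : G₁ = a := by
    have := hfacet G₁ hG₁ h₁; rw [ha] at this; exact this
  have e₂ : G₂ = a := by
    have := hfacet G₂ hG₂ h₂; rw [ha] at this; exact this
  exact hne (e₁.trans e₂.symm)

/-- If σ ∈ Δ−F and σ ∪ F ∈ Δ, then σ is in the boundary of Δ−F. -/
lemma mem_antistar_boundary_of_union_mem {V : Type} [Fintype V] [LinearOrder V]
    {d : ℕ} {Δ : Set (Finset V)} (hΔ : IsPseudomanifold d Δ)
    {F σ : Finset V} (hσ : σ ∈ antistar Δ F) (hun : σ ∪ F ∈ Δ) :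
    σ ∈ complexBoundary d (antistar Δ F) := by
  classical
  obtain ⟨hσΔ, hFσ⟩ := hσ
  obtain ⟨f, hfF, hfσ⟩ := Finset.not_subset.mp hFσ
  obtain ⟨G, hGfacet, hsubG⟩ := exists_facet_above hun
  have hFG : F ⊆ G := (Finset.subset_union_right).trans hsubG
  have hfG : f ∈ G := hFG hfF
  have hGcard : G.card = d := hΔ.2.1.2.2 G hGfacet
  set R : Finset V := G.erase f with hR
  have hRG : R ⊆ G := Finset.erase_subset _ _
  have hRΔ : R ∈ Δ := hΔ.1.2 G hGfacet.1 R hRG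
  have hRcard : R.card = d - 1 := by rw [hR, Finset.card_erase_of_mem hfG, hGcard]
  have hσR : σ ⊆ R := by
    intro x hx
    exact Finset.mem_erase.mpr ⟨fun h => hfσ (h ▸ hx), hsubG (Finset.mem_union_left _ hx)⟩
  have hFR : ¬ F ⊆ R := fun h => (Finset.mem_erase.mp (h hfF)).1 rfl
  have hRΓ : R ∈ antistar Δ F := ⟨hRΔ, hFR⟩
  refine ⟨R, hσR, hRΓ, hRcard, ?_⟩
  obtain ⟨G₁, G₂, hne, hset⟩ := Set.ncard_eq_two.mp (hΔ.2.2 R hRΔ hRcard)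
  have hGmem : G ∈ facetsContaining Δ R := ⟨hGfacet, hRG⟩
  -- every d-card face of Δ containing R is G₁ or G₂
  have hbig : ∀ T : Finset V, T ∈ Δ → R ⊆ T → T.card = d → T = G₁ ∨ T = G₂ := by
    intro T hT hRT hTc
    have : T ∈ facetsContaining Δ R := ⟨facet_of_card_eq hΔ.2.1 hT hTc, hRT⟩
    rw [hset] at this; simpa using this
  -- dichotomy on card of faces of Δ containing R
  have hdich : ∀ T : Finset V, T ∈ Δ → R ⊆ T → T = R ∨ T.card = d := by
    intro T hT hRT
    have h1 : T.card ≤ d := hΔ.2.1.1 T hT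
    have h2 : d - 1 ≤ T.card := hRcard ▸ Finset.card_le_card hRT
    rcases Nat.lt_or_ge T.card d with hlt | hge
    · left
      have : T.card = d - 1 := le_antisymm (Nat.le_sub_one_of_lt hlt) h2
      exact (Finset.eq_of_subset_of_card_le hRT (this ▸ hRcard.ge)).symm
    · right; exact le_antisymm h1 hge
  have hd1 : 1 ≤ d := by
    rw [← hGcard]; exact Finset.card_pos.mpr ⟨f, hfG⟩
  -- the "other" facet G'
  set G' : Finset V := if G = G₁ then G₂ else G₁ with hG'
  have hG'mem : G' ∈ facetsContaining Δ R := by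
    rw [hset, hG']
    split <;> simp
  have hG'card : G'.card = d := hΔ.2.1.2.2 G' hG'mem.1
  have hGne : G ≠ G' := by
    rcases hbig G hGfacet.1 hRG hGcard with h | h
    · rw [hG', if_pos h, h]; exact hne
    · rw [hG']
      split
      · next he => exact he ▸ (h ▸ hne)
      · next he => exact fun hc => he (hc ▸ h ▸ rfl)
  have hbig' : ∀ T : Finset V, T ∈ Δ → R ⊆ T → T.card = d → T = G ∨ T = G' := by
    intro T hT hRT hTc
    rcases hbig T hT hRT hTc with h | h
    · rcases hbig G hGfacet.1 hRG hGcard with hg | hg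
      · left; exact h.trans hg.symm
      · right; rw [hG', if_neg (fun hc => hne (hc.symm.trans hg))]; exact h
    · rcases hbig G hGfacet.1 hRG hGcard with hg | hg
      · right; rw [hG', if_pos hg]; exact h
      · left; exact h.trans hg.symm
  have hRneG' : R ≠ G' := by
    intro h
    rw [h, hG'card] at hRcard
    omega
  by_cases hFG' : F ⊆ G'
  · -- both facets contain F, so R itself is the unique facet of the antistar containing R
    have : facetsContaining (antistar Δ F) R = {R} := by
      ext T
      simp only [Set.mem_singleton_iff, facetsContaining, Set.mem_setOf_eq]
      constructor
      · rintro ⟨⟨hTΓ, _⟩, hRT⟩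
        rcases hdich T hTΓ.1 hRT with h | h
        · exact h
        · exfalso
          rcases hbig' T hTΓ.1 hRT h with h | h
          · exact hTΓ.2 (h ▸ hFG)
          · exact hTΓ.2 (h ▸ hFG')
      · rintro rfl
        refine ⟨⟨hRΓ, fun T hT hsub => ?_⟩, subset_rfl⟩
        rcases hdich T hT.1 hsub with h | h
        · exact h
        · exfalso
          rcases hbig' T hT.1 hsub h with h | h
          · exact hT.2 (h ▸ hFG)
          · exact hT.2 (h ▸ hFG')
    rw [this, Set.ncard_singleton]
  · -- G' is the unique facet of the antistar containing R
    have hG'Γ : G' ∈ antistar Δ F := ⟨hG'mem.1.1, hFG'⟩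
    have : facetsContaining (antistar Δ F) R = {G'} := by
      ext T
      simp only [Set.mem_singleton_iff, facetsContaining, Set.mem_setOf_eq]
      constructor
      · rintro ⟨⟨hTΓ, hTmax⟩, hRT⟩
        rcases hdich T hTΓ.1 hRT with h | h
        · exact absurd (hTmax G' hG'Γ (h ▸ hG'mem.2)) (h ▸ hRneG').symm
        · rcases hbig' T hTΓ.1 hRT h with h | h
          · exact absurd (h ▸ hFG) hTΓ.2
          · exact h
      · rintro rfl
        exact ⟨⟨hG'Γ, fun T hT hsub => hG'mem.1.2 T hT.1 hsub⟩, hG'mem.2⟩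
    rw [this, Set.ncard_singleton]

/-- If Δ is a normal (d−1)-pseudomanifold without boundary, F a face of Δ,
and σ a minimal interior face of the antistar Δ−F, then there is a nonempty H ⊆ F such
that σ ∪ H is a missing face of Δ. -/
theorem min_interior_face_of_antistar {V : Type} [Fintype V] [LinearOrder V]
    (d : ℕ) (Δ : Set (Finset V)) (hΔ : IsNormalPseudomanifold d Δ)
    (F : Finset V) (hF : F ∈ Δ)
    (σ : Finset V) (hσ : IsMinIntFace d (antistar Δ F) σ) :
    ∃ H : Finset V, H.Nonempty ∧ H ⊆ F ∧ IsMissingFace Δ (σ ∪ H) := by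
  classical
  obtain ⟨hσΓ, hσint, hσbd⟩ := hσ
  have hpm : IsPseudomanifold d Δ := hΔ.1
  -- σ ∪ F ∉ Δ, since σ is an interior face
  have hσF : σ ∪ F ∉ Δ := fun h =>
    hσint (mem_antistar_boundary_of_union_mem hpm hσΓ h)
  -- choose H ⊆ F of minimal cardinality with σ ∪ H ∉ Δ
  set 𝒮 : Finset (Finset V) := F.powerset.filter (fun H => σ ∪ H ∉ Δ) with h𝒮
  have hF𝒮 : F ∈ 𝒮 := by simp [h𝒮, hσF]
  obtain ⟨H, hH𝒮, hmin⟩ := Finset.exists_min_image 𝒮 Finset.card ⟨F, hF𝒮⟩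
  simp only [h𝒮, Finset.mem_filter, Finset.mem_powerset] at hH𝒮
  obtain ⟨hHF, hHnot⟩ := hH𝒮
  have hHne : H.Nonempty := by
    rcases H.eq_empty_or_nonempty with rfl | h
    · exact absurd (by simpa using hσΓ.1) hHnot
    · exact h
  refine ⟨H, hHne, hHF, hHnot, fun ρ hρ => ?_⟩
  by_cases hcase : H \ σ ⊆ ρ
  · -- then ρ ∩ σ is a proper subset of σ, hence in the boundary of the antistar
    have hτ : ρ ∩ σ ⊂ σ := by
      refine ⟨Finset.inter_subset_right, fun hsub => ?_⟩
      apply hρ.2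
      intro x hx
      rcases Finset.mem_union.mp hx with hx | hx
      · exact Finset.inter_subset_left (hsub hx)
      · by_cases hxσ : x ∈ σ
        · exact Finset.inter_subset_left (hsub hxσ)
        · exact hcase (Finset.mem_sdiff.mpr ⟨hx, hxσ⟩)
    have hmem : (ρ ∩ σ) ∪ F ∈ Δ :=
      union_mem_of_mem_antistar_boundary hpm (hσbd _ hτ)
    refine hpm.1.2 _ hmem ρ ?_
    intro x hx
    rcases Finset.mem_union.mp (hρ.1 hx) with hxσ | hxH
    · exact Finset.mem_union_left _ (Finset.mem_inter.mpr ⟨hx, hxσ⟩)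
    · exact Finset.mem_union_right _ (hHF hxH)
  · -- then ρ ⊆ σ ∪ (ρ ∩ H), and ρ ∩ H is strictly smaller than H
    obtain ⟨h, hhHσ, hhρ⟩ := Finset.not_subset.mp hcase
    obtain ⟨hhH, _⟩ := Finset.mem_sdiff.mp hhHσ
    have hss : ρ ∩ H ⊂ H :=
      ⟨Finset.inter_subset_right, fun hsub =>
        hhρ (Finset.mem_inter.mp (hsub hhH)).1⟩
    have hmem : σ ∪ (ρ ∩ H) ∈ Δ := by
      by_contra hc
      have : ρ ∩ H ∈ 𝒮 := by
        simp only [h𝒮, Finset.mem_filter, Finset.mem_powerset]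
        exact ⟨(Finset.inter_subset_right).trans hHF, hc⟩
      exact absurd (hmin _ this) (not_le.mpr (Finset.card_lt_card hss))
    refine hpm.1.2 _ hmem ρ ?_
    intro x hx
    rcases Finset.mem_union.mp (hρ.1 hx) with hxσ | hxH
    · exact Finset.mem_union_left _ hxσ
    · exact Finset.mem_union_right _ (Finset.mem_inter.mpr ⟨hx, hxH⟩)

end AffineStress
end
end

section
/- Let d ≥ 3 and let Δ be a strongly connected (d−1)-dimensional simplicial complex with a d-embedding p such that for any two adjacent facets F, F′ of Δ the points p(v), v ∈ F ∪ F′, are affinely independent. Then Stress^a_1(Δ,p) = Σ_{G∈Δ, dim G = d−3} Stress^a_1(st(G,Δ),p). In particular, Stress^a_1(Δ,p) = Σ_{v∈V(Δ)} Stress^a_1(st(v,Δ),p). -/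
open scoped BigOperators Classical

noncomputable section

namespace AffineStress

section PartitionAux

variable {V : Type} [Fintype V] [LinearOrder V]

open MvPolynomial

/-- Auxiliary map sending a coefficient vector to the corresponding linear form. -/
def toPoly : (V → ℝ) →ₗ[ℝ] MvPolynomial V ℝ :=
  ∑ v : V, (LinearMap.proj v).smulRight (X v)

lemma toPoly_apply (a : V → ℝ) : toPoly a = ∑ v : V, a v • (X v : MvPolynomial V ℝ) := by
  simp [toPoly, LinearMap.sum_apply]

lemma coeff_toPoly (a : V → ℝ) (m : V →₀ ℕ) :
    MvPolynomial.coeff m (toPoly a)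
      = ∑ v : V, a v * (if Finsupp.single v 1 = m then 1 else 0) := by
  classical
  rw [toPoly_apply]
  rw [MvPolynomial.coeff_sum]
  refine Finset.sum_congr rfl fun v _ => ?_
  rw [MvPolynomial.coeff_smul, MvPolynomial.coeff_X', smul_eq_mul]

lemma coeff_toPoly_single (a : V → ℝ) (v : V) :
    MvPolynomial.coeff (Finsupp.single v 1) (toPoly a) = a v := by
  classical
  rw [coeff_toPoly]
  rw [Finset.sum_eq_single v]
  · simp
  · intro w _ hw
    have : Finsupp.single w (1:ℕ) ≠ Finsupp.single v 1 := by
      intro h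
      exact hw (Finsupp.single_left_injective one_ne_zero h)
    simp [this]
  · simp

lemma coeff_toPoly_ne (a : V → ℝ) (m : V →₀ ℕ) (h : ∀ v, Finsupp.single v 1 ≠ m) :
    MvPolynomial.coeff m (toPoly a) = 0 := by
  rw [coeff_toPoly]
  refine Finset.sum_eq_zero fun v _ => by simp [h v]

lemma pderiv_toPoly (v : V) (a : V → ℝ) :
    MvPolynomial.pderiv v (toPoly a) = MvPolynomial.C (a v) := by
  classical
  rw [toPoly_apply, map_sum]
  have h : ∀ w : V, MvPolynomial.pderiv v (a w • X w)
      = if w = v then MvPolynomial.C (a w) else 0 := by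
    intro w
    rw [Derivation.map_smul, MvPolynomial.pderiv_X]
    by_cases h : w = v
    · subst h
      simp [MvPolynomial.smul_eq_C_mul]
    · simp [Pi.single_apply, Ne.symm h, h]
  rw [Finset.sum_congr rfl fun w _ => h w,
    Finset.sum_ite_eq' Finset.univ v (fun w => MvPolynomial.C (a w))]
  simp

lemma dirDeriv_toPoly (θ : V → ℝ) (a : V → ℝ) :
    dirDeriv θ (toPoly a) = MvPolynomial.C (∑ v : V, θ v * a v) := by
  rw [dirDeriv, LinearMap.sum_apply]
  have h : ∀ v : V, (θ v • (MvPolynomial.pderiv v).toLinearMap) (toPoly a)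
      = MvPolynomial.C (θ v * a v) := by
    intro v
    rw [LinearMap.smul_apply, Derivation.coeFn_coe, pderiv_toPoly,
      MvPolynomial.smul_eq_C_mul, ← MvPolynomial.C_mul]
  rw [Finset.sum_congr rfl fun v _ => h v, ← map_sum]

lemma toPoly_mem_homogeneous (a : V → ℝ) :
    toPoly a ∈ MvPolynomial.homogeneousSubmodule V ℝ 1 := by
  rw [toPoly_apply]
  exact Submodule.sum_mem _ fun v _ =>
    Submodule.smul_mem _ _ ((MvPolynomial.mem_homogeneousSubmodule _ _).2
      (MvPolynomial.isHomogeneous_X _ _))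

lemma exists_single_of_degree_one {m : V →₀ ℕ} (h : ∑ v ∈ m.support, m v = 1) :
    ∃ v, m = Finsupp.single v 1 := by
  classical
  have hne : m.support.Nonempty := by
    rcases Finset.eq_empty_or_nonempty m.support with he | hne
    · rw [he] at h; simp at h
    · exact hne
  obtain ⟨v, hv⟩ := hne
  refine ⟨v, ?_⟩
  have h2 : m v ≤ ∑ w ∈ m.support, m w := Finset.single_le_sum (fun _ _ => Nat.zero_le _) hv
  have h1 : 1 ≤ m v := Nat.one_le_iff_ne_zero.2 (Finsupp.mem_support_iff.1 hv)
  have hmv : m v = 1 := by omega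
  have hsum : ∑ u ∈ m.support.erase v, m u = 0 := by
    have := Finset.add_sum_erase m.support m hv
    omega
  ext w
  by_cases hw : w = v
  · subst hw; simp [hmv]
  · have hw0 : m w = 0 := by
      by_contra hw0
      have hws : w ∈ m.support.erase v :=
        Finset.mem_erase.2 ⟨hw, Finsupp.mem_support_iff.2 hw0⟩
      exact hw0 (Finset.sum_eq_zero_iff.1 hsum w hws)
    simp [Finsupp.single_apply, hw0, Ne.symm hw]

/-- The space of coefficient vectors of affine 1-stresses. -/
def depSpace (d : ℕ) (Γ : Set (Finset V)) (p : V → Fin d → ℝ) : Submodule ℝ (V → ℝ) where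
  carrier := {a | (∀ v, a v ≠ 0 → ({v} : Finset V) ∈ Γ) ∧
    (∀ j : Fin d, ∑ v : V, p v j * a v = 0) ∧ ∑ v : V, a v = 0}
  zero_mem' := ⟨fun v hv => absurd rfl hv, fun j => by simp, by simp⟩
  add_mem' := by
    rintro a b ⟨ha1, ha2, ha3⟩ ⟨hb1, hb2, hb3⟩
    refine ⟨fun v hv => ?_, fun j => ?_, ?_⟩
    · by_cases h : a v = 0
      · exact hb1 v (by simpa [h] using hv)
      · exact ha1 v h
    · simp only [Pi.add_apply, mul_add, Finset.sum_add_distrib, ha2 j, hb2 j, add_zero]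
    · simp only [Pi.add_apply, Finset.sum_add_distrib, ha3, hb3, add_zero]
  smul_mem' := by
    rintro c a ⟨ha1, ha2, ha3⟩
    refine ⟨fun v hv => ?_, fun j => ?_, ?_⟩
    · refine ha1 v fun h => hv ?_
      simp [h]
    · simp only [Pi.smul_apply, smul_eq_mul]
      have : ∑ x : V, p x j * (c * a x) = c * ∑ x : V, p x j * a x := by
        rw [Finset.mul_sum]
        exact Finset.sum_congr rfl fun x _ => by ring
      rw [this, ha2 j, mul_zero]
    · simp only [Pi.smul_apply, smul_eq_mul, ← Finset.mul_sum, ha3, mul_zero]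

lemma affStress_eq_map (d : ℕ) (Γ : Set (Finset V)) (p : V → Fin d → ℝ) :
    affStress d Γ p 1 = (depSpace d Γ p).map toPoly := by
  classical
  ext f
  simp only [affStress, linStress, Submodule.mem_inf, Submodule.mem_iInf, LinearMap.mem_ker,
    Submodule.mem_map]
  constructor
  · rintro ⟨⟨⟨hhom, hsupp⟩, hker⟩, haff⟩
    set a : V → ℝ := fun v => MvPolynomial.coeff (Finsupp.single v 1) f with ha
    have hmono : ∀ m : V →₀ ℕ, MvPolynomial.coeff m f ≠ 0 → ∃ v, m = Finsupp.single v 1 := by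
      intro m hm
      have hdeg := (MvPolynomial.mem_homogeneousSubmodule _ _).1 hhom hm
      refine exists_single_of_degree_one ?_
      simpa [Finsupp.weight_apply, Finsupp.sum, smul_eq_mul] using hdeg
    have hfa : f = toPoly a := by
      apply MvPolynomial.ext
      intro m
      by_cases hm : ∃ v, m = Finsupp.single v 1
      · obtain ⟨v, rfl⟩ := hm
        rw [coeff_toPoly_single]
      · push_neg at hm
        rw [coeff_toPoly_ne a m (fun v => fun he => hm v he.symm)]
        by_contra hc
        exact absurd (hmono m hc) (by push_neg; exact hm)
    refine ⟨a, ⟨fun v hv => ?_, fun j => ?_, ?_⟩, hfa.symm⟩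
    · have : (Finsupp.single v 1).support ∈ Γ := hsupp _ (MvPolynomial.mem_support_iff.2 hv)
      simpa [Finsupp.support_single_ne_zero v one_ne_zero] using this
    · have := hker j
      rw [hfa, dirDeriv_toPoly, MvPolynomial.C_eq_zero] at this
      exact this
    · rw [hfa, dirDeriv_toPoly, MvPolynomial.C_eq_zero] at haff
      simpa using haff
  · rintro ⟨a, ⟨ha1, ha2, ha3⟩, rfl⟩
    refine ⟨⟨⟨toPoly_mem_homogeneous a, ?_⟩, fun j => ?_⟩, ?_⟩
    · intro m hm
      have hc : MvPolynomial.coeff m (toPoly a) ≠ 0 := MvPolynomial.mem_support_iff.1 hm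
      have hm1 : ∃ v, m = Finsupp.single v 1 := by
        by_contra h
        push_neg at h
        exact hc (coeff_toPoly_ne a m fun v he => h v he.symm)
      obtain ⟨v, rfl⟩ := hm1
      rw [coeff_toPoly_single] at hc
      have := ha1 v hc
      simpa [Finsupp.support_single_ne_zero v one_ne_zero] using this
    · rw [dirDeriv_toPoly, MvPolynomial.C_eq_zero]
      exact ha2 j
    · rw [dirDeriv_toPoly, MvPolynomial.C_eq_zero]
      simpa using ha3

lemma depSpace_mono {d : ℕ} {Γ Γ' : Set (Finset V)} {p : V → Fin d → ℝ}
    (h : ∀ v : V, ({v} : Finset V) ∈ Γ → ({v} : Finset V) ∈ Γ') :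
    depSpace d Γ p ≤ depSpace d Γ' p := by
  rintro a ⟨ha1, ha2, ha3⟩
  exact ⟨fun v hv => h v (ha1 v hv), ha2, ha3⟩

/-- `c` is the coefficient vector of a barycentric representation of `p u` on `W`. -/
def IsRep {d : ℕ} (p : V → Fin d → ℝ) (W : Finset V) (u : V) (c : V → ℝ) : Prop :=
  (∀ v, c v ≠ 0 → v ∈ W) ∧ (∑ v : V, c v = 1) ∧ ∀ j, ∑ v : V, p v j * c v = p u j

lemma sum_univ_eq_sum_of_support {c : V → ℝ} {W : Finset V} (h : ∀ v, c v ≠ 0 → v ∈ W) :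
    ∑ v : V, c v = ∑ v ∈ W, c v := by
  refine (Finset.sum_subset (Finset.subset_univ W) fun v _ hv => ?_).symm
  by_contra hc
  exact hv (h v hc)

lemma exists_rep {d : ℕ} {p : V → Fin d → ℝ} {W : Finset V}
    (hW : AffineIndependent ℝ (fun v : (W : Finset V) => p v.1))
    (hcard : W.card = d + 1) (u : V) : ∃ c, IsRep p W u c := by
  classical
  have htot : affineSpan ℝ (Set.range fun v : (W : Finset V) => p v.1) = ⊤ := by
    rw [hW.affineSpan_eq_top_iff_card_eq_finrank_add_one]
    rw [Fintype.card_coe, hcard]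
    congr 1
    rw [Module.finrank_fin_fun]
  let b : AffineBasis (W : Finset V) ℝ (Fin d → ℝ) := ⟨fun v : (W : Finset V) => p v.1, hW, htot⟩
  set c : V → ℝ := fun v => if hv : v ∈ W then b.coord ⟨v, hv⟩ (p u) else 0 with hc
  have hsupp : ∀ v, c v ≠ 0 → v ∈ W := by
    intro v hv
    by_contra h
    exact hv (dif_neg h)
  have hWsum : ∀ f : {x : V // x ∈ W} → ℝ, ∑ v ∈ W, (fun v => if hv : v ∈ W then f ⟨v, hv⟩ else 0) v
      = ∑ i : {x : V // x ∈ W}, f i := by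
    intro f
    rw [← Finset.sum_attach W]
    rw [Finset.univ_eq_attach]
    refine Finset.sum_congr rfl fun i _ => ?_
    rw [dif_pos i.2]
  refine ⟨c, hsupp, ?_, ?_⟩
  · rw [sum_univ_eq_sum_of_support hsupp]
    rw [hWsum (fun i => b.coord i (p u))]
    exact b.sum_coord_apply_eq_one (p u)
  · intro j
    have hsupp2 : ∀ v, p v j * c v ≠ 0 → v ∈ W := by
      intro v hv
      refine hsupp v fun h => hv ?_
      rw [h, mul_zero]
    rw [sum_univ_eq_sum_of_support hsupp2]
    have hlin := b.linear_combination_coord_eq_self (p u)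
    have hlinj := congrFun hlin j
    rw [Finset.sum_apply] at hlinj
    have : ∑ v ∈ W, p v j * c v = ∑ i : (W : Finset V), b.coord i (p u) * p i.1 j := by
      rw [← hWsum (fun i => b.coord i (p u) * p i.1 j)]
      refine Finset.sum_congr rfl fun v hv => ?_
      rw [hc]
      simp only [dif_pos hv]
      ring
    rw [this]
    rw [← hlinj]
    refine Finset.sum_congr rfl fun i _ => ?_
    rw [Pi.smul_apply, smul_eq_mul]
    rfl

lemma dep_zero {d : ℕ} {p : V → Fin d → ℝ} {W : Finset V}
    (hW : AffineIndependent ℝ (fun v : (W : Finset V) => p v.1))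
    {c : V → ℝ} (hsupp : ∀ v, c v ≠ 0 → v ∈ W)
    (h0 : ∑ v : V, c v = 0) (hj : ∀ j, ∑ v : V, p v j * c v = 0) : c = 0 := by
  classical
  have key := affineIndependent_iff.1 hW Finset.univ (fun i => c i.1) ?_ ?_
  · funext v
    by_cases hv : v ∈ W
    · exact key ⟨v, hv⟩ (Finset.mem_univ _)
    · by_contra hc
      exact hv (hsupp v hc)
  · rw [Finset.univ_eq_attach, Finset.sum_attach W c]
    rw [← sum_univ_eq_sum_of_support hsupp]
    exact h0
  · funext j
    rw [Finset.sum_apply]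
    simp only [Pi.smul_apply, smul_eq_mul]
    rw [Finset.univ_eq_attach, Finset.sum_attach W (fun v => c v * p v j)]
    have hsupp2 : ∀ v, c v * p v j ≠ 0 → v ∈ W := by
      intro v hv
      refine hsupp v fun h => hv ?_
      rw [h, zero_mul]
    rw [← sum_univ_eq_sum_of_support hsupp2]
    rw [show ∑ v : V, c v * p v j = ∑ v : V, p v j * c v from
      Finset.sum_congr rfl fun v _ => mul_comm _ _]
    simp [hj j]

lemma exists_facet {Δ : Set (Finset V)} (hc : IsComplex Δ) {σ : Finset V} (hσ : σ ∈ Δ) :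
    ∃ F, IsFacetOf Δ F ∧ σ ⊆ F := by
  classical
  let s : Finset (Finset V) := Finset.univ.filter (fun τ => τ ∈ Δ ∧ σ ⊆ τ)
  have hs : σ ∈ s := by simp [s, hσ]
  obtain ⟨F, hF, hmax⟩ := Finset.exists_max_image s Finset.card ⟨σ, hs⟩
  simp only [s, Finset.mem_filter, Finset.mem_univ, true_and] at hF
  refine ⟨F, ⟨hF.1, fun G hG hsub => ?_⟩, hF.2⟩
  have hGs : G ∈ s := by
    simp only [s, Finset.mem_filter, Finset.mem_univ, true_and]
    exact ⟨hG, hF.2.trans hsub⟩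
  exact (Finset.eq_of_subset_of_card_le hsub (hmax G hGs)).symm

lemma rtg_first_step {α : Type*} {r : α → α → Prop} {a b : α}
    (h : Relation.ReflTransGen r a b) : a ≠ b → ∃ c, r a c ∧ a ≠ c := by
  induction h with
  | refl => exact fun hne => absurd rfl hne
  | @tail b' c' hab hbc ih =>
    intro hne
    by_cases hab' : a = b'
    · subst hab'
      exact ⟨c', hbc, hne⟩
    · exact ih hab'

lemma adj_cards {d : ℕ} {Δ : Set (Finset V)} (hpure : IsPure d Δ) {F G : Finset V}
    (hF : IsFacetOf Δ F) (hG : IsFacetOf Δ G) (hne : F ≠ G) (hdc : d - 1 ≤ (F ∩ G).card)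
    (hd1 : 1 ≤ d) : (F ∩ G).card = d - 1 ∧ (F ∪ G).card = d + 1 := by
  have hcF : F.card = d := hpure.2.2 F hF
  have hcG : G.card = d := hpure.2.2 G hG
  have hle : (F ∩ G).card ≤ d := le_trans (Finset.card_le_card Finset.inter_subset_left) hcF.le
  have hnd : (F ∩ G).card ≠ d := by
    intro h
    have h1 : F ∩ G = F := Finset.eq_of_subset_of_card_le Finset.inter_subset_left
      (by rw [h, hcF])
    have h2 : F ⊆ G := by
      rw [← h1]
      exact Finset.inter_subset_right
    exact hne (hF.2 G hG.1 h2).symm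
  have hci := Finset.card_union_add_card_inter F G
  constructor
  · omega
  · omega

/-- The core combinatorial/geometric result, at the level of coefficient vectors. -/
lemma depSpace_sup (d : ℕ) (hd : 3 ≤ d) (Δ : Set (Finset V)) (hΔ : StronglyConnected d Δ)
    (p : V → Fin d → ℝ)
    (hp : ∀ F G : Finset V, IsFacetOf Δ F → IsFacetOf Δ G → F ≠ G →
      d - 1 ≤ (F ∩ G).card → AffineIndependent ℝ (fun v : (F ∪ G : Finset V) => p v.1)) :
    depSpace d Δ p
      = ⨆ G ∈ {G : Finset V | G ∈ Δ ∧ G.card = d - 2}, depSpace d (closedStar Δ G) p := by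
  classical
  obtain ⟨hcomp, hpure, hconn⟩ := hΔ
  set S := ⨆ G ∈ {G : Finset V | G ∈ Δ ∧ G.card = d - 2}, depSpace d (closedStar Δ G) p
    with hS
  have hfacetcard : ∀ F, IsFacetOf Δ F → F.card = d := hpure.2.2
  have hd1 : 1 ≤ d := by omega
  -- membership in a star gives membership in S
  have hstar : ∀ G : Finset V, G ∈ Δ → G.card = d - 2 → ∀ c : V → ℝ,
      (∀ v, c v ≠ 0 → ({v} ∪ G : Finset V) ∈ Δ) → (∀ j, ∑ v : V, p v j * c v = 0) →
      (∑ v : V, c v = 0) → c ∈ S := by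
    intro G hG hGc c h1 h2 h3
    have hle : depSpace d (closedStar Δ G) p ≤ S :=
      le_iSup₂ (f := fun (G : Finset V) (_ : G ∈ {G : Finset V | G ∈ Δ ∧ G.card = d - 2}) =>
        depSpace d (closedStar Δ G) p) G ⟨hG, hGc⟩
    exact hle ⟨h1, h2, h3⟩
  apply le_antisymm
  · -- hard direction
    rintro a ⟨haΔ, haj, has⟩
    by_cases hone : ∀ F F', IsFacetOf Δ F → IsFacetOf Δ F' → F = F'
    · -- single facet
      obtain ⟨σ0, hσ0, hσ0c⟩ := hpure.2.1
      have hfac : IsFacetOf Δ σ0 := ⟨hσ0, fun G hG hsub =>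
        (Finset.eq_of_subset_of_card_le hsub
          (le_trans (hpure.1 G hG) (le_of_eq hσ0c.symm))).symm⟩
      obtain ⟨G, hGsub, hGc⟩ := Finset.exists_subset_card_eq
        (show d - 2 ≤ σ0.card by omega)
      refine hstar G (hcomp.2 _ hσ0 G hGsub) hGc a ?_ haj has
      intro v hv
      obtain ⟨F, hF, hsub⟩ := exists_facet hcomp (haΔ v hv)
      have hFσ : F = σ0 := hone F σ0 hF hfac
      refine hcomp.2 σ0 hσ0 _ (Finset.union_subset ?_ hGsub)
      rw [← hFσ]
      exact hsub
    · -- at least two facets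
      push_neg at hone
      obtain ⟨F, F', hF, hF', hne⟩ := hone
      obtain ⟨F₂, hadj12, hne12⟩ := rtg_first_step (hconn F F' hF hF') hne
      set F₁ := F with hF₁def
      have hF₁ : IsFacetOf Δ F₁ := hF
      have hF₂ : IsFacetOf Δ F₂ := hadj12.2.1
      have hWpair : ∀ {A B : Finset V}, Adjacent d Δ A B → A ≠ B →
          (A ∪ B).card = d + 1 ∧ AffineIndependent ℝ (fun v : (A ∪ B : Finset V) => p v.1) :=
        fun {A B} h hne' => ⟨(adj_cards hpure h.1 h.2.1 hne' h.2.2 hd1).2,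
          hp A B h.1 h.2.1 hne' h.2.2⟩
      obtain ⟨hcard12, haff12⟩ := hWpair hadj12 hne12
      -- basic facts about differences of representations
      have hsuppsub : ∀ (c1 c2 : V → ℝ) (W1 W2 T : Finset V), (∀ v, c1 v ≠ 0 → v ∈ W1) →
          (∀ v, c2 v ≠ 0 → v ∈ W2) → W1 ⊆ T → W2 ⊆ T →
          ∀ v, (c1 - c2) v ≠ 0 → v ∈ T := by
        intro c1 c2 W1 W2 T h1 h2 hs1 hs2 v hv
        by_cases h : c1 v ≠ 0
        · exact hs1 (h1 v h)
        · push_neg at h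
          refine hs2 (h2 v fun h0 => ?_)
          apply hv
          simp [Pi.sub_apply, h, h0]
      have hrepdiff : ∀ (u : V) (c1 c2 : V → ℝ) (W1 W2 : Finset V),
          IsRep p W1 u c1 → IsRep p W2 u c2 →
          (∀ j, ∑ v : V, p v j * (c1 - c2) v = 0) ∧ (∑ v : V, (c1 - c2) v = 0) := by
        intro u c1 c2 W1 W2 h1 h2
        constructor
        · intro j
          simp only [Pi.sub_apply, mul_sub, Finset.sum_sub_distrib, h1.2.2 j, h2.2.2 j, sub_self]
        · simp only [Pi.sub_apply, Finset.sum_sub_distrib, h1.2.1, h2.2.1, sub_self]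
      -- difference of stresses supported near a common facet lies in S
      have hdiff : ∀ A M B : Finset V, IsFacetOf Δ A → IsFacetOf Δ M → IsFacetOf Δ B →
          d - 1 ≤ (A ∩ M).card → d - 1 ≤ (M ∩ B).card →
          ∀ e : V → ℝ, (∀ v, e v ≠ 0 → v ∈ A ∪ M ∪ B) →
          (∀ j, ∑ v : V, p v j * e v = 0) → (∑ v : V, e v = 0) → e ∈ S := by
        intro A M B hA hM hB hAM hMB e he hej hes
        have hMc : M.card = d := hfacetcard M hM
        have hsub : (A ∩ M) ∪ (M ∩ B) ⊆ M :=
          Finset.union_subset Finset.inter_subset_right Finset.inter_subset_left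
        have hcu : ((A ∩ M) ∪ (M ∩ B)).card ≤ d :=
          le_trans (Finset.card_le_card hsub) hMc.le
        have hci := Finset.card_union_add_card_inter (A ∩ M) (M ∩ B)
        obtain ⟨G, hGsub, hGc⟩ := Finset.exists_subset_card_eq
          (show d - 2 ≤ ((A ∩ M) ∩ (M ∩ B)).card by omega)
        have hGA : G ⊆ A := fun x hx => Finset.inter_subset_left
          (Finset.inter_subset_left (hGsub hx))
        have hGM : G ⊆ M := fun x hx => Finset.inter_subset_right
          (Finset.inter_subset_left (hGsub hx))
        have hGB : G ⊆ B := fun x hx => Finset.inter_subset_right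
          (Finset.inter_subset_right (hGsub hx))
        refine hstar G (hcomp.2 M hM.1 G hGM) hGc e ?_ hej hes
        intro v hv
        rcases Finset.mem_union.1 (he v hv) with hv' | hvB
        · rcases Finset.mem_union.1 hv' with hvA | hvM
          · exact hcomp.2 A hA.1 _
              (Finset.union_subset (Finset.singleton_subset_iff.2 hvA) hGA)
          · exact hcomp.2 M hM.1 _
              (Finset.union_subset (Finset.singleton_subset_iff.2 hvM) hGM)
        · exact hcomp.2 B hB.1 _
            (Finset.union_subset (Finset.singleton_subset_iff.2 hvB) hGB)
      -- transport along paths in the facet adjacency graph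
      have hkey : ∀ F0 : Finset V, Relation.ReflTransGen (Adjacent d Δ) F0 F₁ →
          ∀ F' : Finset V, Adjacent d Δ F0 F' → F0 ≠ F' →
          ∀ (u : V) (c c' : V → ℝ), IsRep p (F0 ∪ F') u c → IsRep p (F₁ ∪ F₂) u c' →
          c - c' ∈ S := by
        intro F0 hpath
        induction hpath using Relation.ReflTransGen.head_induction_on with
        | refl =>
          intro F' hadj hne' u c c' hc hc'
          obtain ⟨hj0, hs0⟩ := hrepdiff u c c' _ _ hc hc'
          refine hdiff F' F₁ F₂ hadj.2.1 hadj.1 hF₂ ?_ hadj12.2.2 (c - c')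
            (hsuppsub c c' (F₁ ∪ F') (F₁ ∪ F₂) (F' ∪ F₁ ∪ F₂) hc.1 hc'.1 ?_ ?_) hj0 hs0
          · rw [Finset.inter_comm]; exact hadj.2.2
          · intro x hx
            simp only [Finset.mem_union] at hx ⊢
            tauto
          · intro x hx
            simp only [Finset.mem_union] at hx ⊢
            tauto
        | @head A Mid hadj' hpath' ih =>
          intro F' hadj hne' u c c' hc hc'
          by_cases heq : A = Mid
          · subst heq
            exact ih F' hadj hne' u c c' hc hc'
          · obtain ⟨hcardAM, haffAM⟩ := hWpair hadj' heq
            obtain ⟨c'', hc''⟩ := exists_rep haffAM hcardAM u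
            have h1 : c - c'' ∈ S := by
              obtain ⟨hj0, hs0⟩ := hrepdiff u c c'' _ _ hc hc''
              refine hdiff F' A Mid hadj.2.1 hadj.1 hadj'.2.1 ?_ hadj'.2.2 (c - c'')
                (hsuppsub c c'' (A ∪ F') (A ∪ Mid) (F' ∪ A ∪ Mid) hc.1 hc''.1 ?_ ?_) hj0 hs0
              · rw [Finset.inter_comm]; exact hadj.2.2
              · intro x hx
                simp only [Finset.mem_union] at hx ⊢
                tauto
              · intro x hx
                simp only [Finset.mem_union] at hx ⊢
                tauto
            have h2 : c'' - c' ∈ S := by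
              refine ih A ⟨hadj'.2.1, hadj'.1, ?_⟩ (Ne.symm heq) u c'' c' ?_ hc'
              · rw [Finset.inter_comm]; exact hadj'.2.2
              · rw [Finset.union_comm]
                exact hc''
            have heqn : c - c' = (c - c'') + (c'' - c') := by abel
            rw [heqn]
            exact Submodule.add_mem S h1 h2
      -- the elementary stresses δ_u − c_u lie in S
      have hdelta : ∀ u : V, ({u} : Finset V) ∈ Δ → ∀ c' : V → ℝ, IsRep p (F₁ ∪ F₂) u c' →
          ((fun v => if v = u then (1:ℝ) else 0) - c') ∈ S := by
        intro u hu c' hc'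
        obtain ⟨Fu, hFu, hsubFu⟩ := exists_facet hcomp hu
        have huF : u ∈ Fu := Finset.singleton_subset_iff.1 hsubFu
        have hFp : ∃ F', Adjacent d Δ Fu F' ∧ Fu ≠ F' := by
          by_cases hFeq : Fu = F₁
          · subst hFeq
            exact ⟨F₂, hadj12, hne12⟩
          · exact rtg_first_step (hconn Fu F₁ hFu hF₁) hFeq
        obtain ⟨F', hadjFF', hneFF'⟩ := hFp
        obtain ⟨hcardFF', haffFF'⟩ := hWpair hadjFF' hneFF'
        obtain ⟨c, hc⟩ := exists_rep haffFF' hcardFF' u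
        have hrepdu : IsRep p {u} u (fun v => if v = u then (1:ℝ) else 0) := by
          refine ⟨fun v hv => ?_, ?_, fun j => ?_⟩
          · rcases eq_or_ne v u with h | h
            · simp [h]
            · simp [h] at hv
          · rw [Finset.sum_ite_eq' Finset.univ u (fun _ => (1:ℝ))]
            simp
          · have : ∀ v : V, p v j * (if v = u then (1:ℝ) else 0)
                = if v = u then p v j else 0 := by
              intro v
              split <;> simp
            rw [Finset.sum_congr rfl fun v _ => this v,
              Finset.sum_ite_eq' Finset.univ u (fun v => p v j)]
            simp
        have h1 : (fun v => if v = u then (1:ℝ) else 0) - c ∈ S := by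
          obtain ⟨hj0, hs0⟩ := hrepdiff u _ c _ _ hrepdu hc
          refine hdiff Fu Fu F' hFu hFu hadjFF'.2.1 ?_ hadjFF'.2.2 _
            (hsuppsub _ c {u} (Fu ∪ F') (Fu ∪ Fu ∪ F') hrepdu.1 hc.1 ?_ ?_) hj0 hs0
          · rw [Finset.inter_self]
            rw [hfacetcard Fu hFu]
            omega
          · intro x hx
            rw [Finset.mem_singleton] at hx
            subst hx
            simp only [Finset.mem_union]
            tauto
          · intro x hx
            simp only [Finset.mem_union] at hx ⊢
            tauto
        have h2 : c - c' ∈ S :=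
          hkey Fu (hconn Fu F₁ hFu hF₁) F' hadjFF' hneFF' u c c' hc hc'
        have heqn : (fun v => if v = u then (1:ℝ) else 0) - c'
            = ((fun v => if v = u then (1:ℝ) else 0) - c) + (c - c') := by abel
        rw [heqn]
        exact Submodule.add_mem S h1 h2
      -- choose representations over F₁ ∪ F₂ for every u
      choose cB hcB using fun u : V => exists_rep haff12 hcard12 u
      have hterm : ∀ u : V, a u • ((fun v => if v = u then (1:ℝ) else 0) - cB u) ∈ S := by
        intro u
        by_cases h : a u = 0
        · rw [h, zero_smul]
          exact Submodule.zero_mem S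
        · exact Submodule.smul_mem S _ (hdelta u (haΔ u h) (cB u) (hcB u))
      have hr : (fun v => ∑ u : V, a u * cB u v) = 0 := by
        refine dep_zero haff12 ?_ ?_ ?_
        · intro v hv
          by_contra hvW
          refine hv (Finset.sum_eq_zero fun u _ => ?_)
          have h0 : cB u v = 0 := by
            by_contra h'
            exact hvW ((hcB u).1 v h')
          rw [h0, mul_zero]
        · rw [Finset.sum_comm]
          have h1 : ∀ u : V, ∑ v : V, a u * cB u v = a u := by
            intro u
            rw [← Finset.mul_sum, (hcB u).2.1, mul_one]
          rw [Finset.sum_congr rfl fun u _ => h1 u]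
          exact has
        · intro j
          have h1 : ∀ v : V, p v j * ∑ u : V, a u * cB u v
              = ∑ u : V, a u * (p v j * cB u v) := by
            intro v
            rw [Finset.mul_sum]
            exact Finset.sum_congr rfl fun u _ => by ring
          rw [Finset.sum_congr rfl fun v _ => h1 v, Finset.sum_comm]
          have h2 : ∀ u : V, ∑ v : V, a u * (p v j * cB u v) = a u * p u j := by
            intro u
            rw [← Finset.mul_sum, (hcB u).2.2 j]
          rw [Finset.sum_congr rfl fun u _ => h2 u]
          rw [show ∑ u : V, a u * p u j = ∑ u : V, p u j * a u from
            Finset.sum_congr rfl fun u _ => mul_comm _ _]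
          exact haj j
      have hsplit : a = ∑ u : V, a u • ((fun v => if v = u then (1:ℝ) else 0) - cB u) := by
        funext v
        rw [Finset.sum_apply]
        simp only [Pi.smul_apply, Pi.sub_apply, smul_eq_mul, mul_sub]
        rw [Finset.sum_sub_distrib]
        have hA : ∑ u : V, a u * (if v = u then (1:ℝ) else 0) = a v := by
          have : ∀ u : V, a u * (if v = u then (1:ℝ) else 0)
              = if u = v then a u else 0 := by
            intro u
            rcases eq_or_ne u v with h | h
            · simp [h]
            · simp [h, Ne.symm h]
          rw [Finset.sum_congr rfl fun u _ => this u,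
            Finset.sum_ite_eq' Finset.univ v (fun u => a u)]
          simp
        have hB : ∑ u : V, a u * cB u v = 0 := by
          have := congrFun hr v
          simpa using this
        rw [hA, hB, sub_zero]
      rw [hsplit]
      exact Submodule.sum_mem S fun u _ => hterm u
  · -- easy direction
    refine iSup₂_le fun G hG => depSpace_mono fun v hv => ?_
    exact hcomp.2 _ hv {v} Finset.subset_union_left

lemma depSpace_sup_vertices (d : ℕ) (hd : 3 ≤ d) (Δ : Set (Finset V))
    (hΔ : StronglyConnected d Δ) (p : V → Fin d → ℝ)
    (hp : ∀ F G : Finset V, IsFacetOf Δ F → IsFacetOf Δ G → F ≠ G →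
      d - 1 ≤ (F ∩ G).card → AffineIndependent ℝ (fun v : (F ∪ G : Finset V) => p v.1)) :
    depSpace d Δ p = ⨆ v ∈ vertices Δ, depSpace d (closedStar Δ {v}) p := by
  apply le_antisymm
  · rw [depSpace_sup d hd Δ hΔ p hp]
    refine iSup₂_le fun G hG => ?_
    obtain ⟨hGΔ, hGc⟩ := hG
    have hGne : G.Nonempty := Finset.card_pos.1 (by omega)
    obtain ⟨v, hv⟩ := hGne
    have hvΔ : ({v} : Finset V) ∈ Δ := hΔ.1.2 G hGΔ {v} (Finset.singleton_subset_iff.2 hv)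
    refine le_trans (depSpace_mono fun w hw => ?_)
      (le_iSup₂ (f := fun (v : V) (_ : v ∈ vertices Δ) =>
        depSpace d (closedStar Δ {v}) p) v hvΔ)
    refine hΔ.1.2 _ hw _ ?_
    exact Finset.union_subset_union (subset_refl _) (Finset.singleton_subset_iff.2 hv)
  · refine iSup₂_le fun v hv => depSpace_mono fun w hw => ?_
    exact hΔ.1.2 _ hw {w} Finset.subset_union_left

end PartitionAux

/-- For a strongly connected (d−1)-dimensional complex (d ≥ 3) with a
d-embedding such that the vertices of any two adjacent facets are affinely independent,
the space of affine 1-stresses decomposes as the sum over (d−3)-faces (and hence over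
vertices) of the affine 1-stress spaces of their stars. -/
theorem affine_one_stress_partition_of_unity {V : Type} [Fintype V] [LinearOrder V]
    (d : ℕ) (hd : 3 ≤ d) (Δ : Set (Finset V)) (hΔ : StronglyConnected d Δ)
    (p : V → Fin d → ℝ)
    (hp : ∀ F G : Finset V, IsFacetOf Δ F → IsFacetOf Δ G → F ≠ G →
      d - 1 ≤ (F ∩ G).card → AffineIndependent ℝ (fun v : (F ∪ G : Finset V) => p v.1)) :
    affStress d Δ p 1 =
      (⨆ G ∈ {G : Finset V | G ∈ Δ ∧ G.card = d - 2}, affStress d (closedStar Δ G) p 1) ∧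
    affStress d Δ p 1 = ⨆ v ∈ vertices Δ, affStress d (closedStar Δ {v}) p 1 := by
  have h1 := depSpace_sup d hd Δ hΔ p hp
  have h2 := depSpace_sup_vertices d hd Δ hΔ p hp
  constructor
  · rw [affStress_eq_map d Δ p, h1, Submodule.map_iSup]
    refine iSup_congr fun G => ?_
    rw [Submodule.map_iSup]
    exact iSup_congr fun hG => (affStress_eq_map d (closedStar Δ G) p).symm
  · rw [affStress_eq_map d Δ p, h2, Submodule.map_iSup]
    refine iSup_congr fun v => ?_
    rw [Submodule.map_iSup]
    exact iSup_congr fun hv => (affStress_eq_map d (closedStar Δ {v}) p).symm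

end AffineStress
end
end
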